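/- Commutator formula for the fiberwise Hilbert transform and the geodesic vector field on the Euclidean plane (the flat instance of equation (4.4) of the survey, the Pestov–Uhlmann commutator [H,X]u = (X₊u)₀ + X₊u₀): Let N ≥ 0 and let u(x, y, θ) = Σ_{k=−N}^{N} u_k(x, y) e^{i k θ}, where each u_k : ℝ² → ℂ is smooth. Define the fiberwise Hilbert transform by H u = Σ_{k=−N}^{N} (−i · sgn(k)) u_k(x, y) e^{i k θ} with the convention sgn(0) = 0, the operators X = cos θ ∂ₓ + sin θ ∂ᵧ and X₊ = sin θ ∂ₓ − cos θ ∂ᵧ, and for a function w of this form let w₀(x, y) = (1/2π) ∫₀^{2π} w(x, y, θ) dθ denote its zeroth Fourier mode in θ, regarded as a function on ℝ² × ℝ constant in θ. Then H(Xu) − X(Hu) = (X₊u)₀ + X₊(u₀). -/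

import Mathlib

open MeasureTheory

/-- partial derivative in `x` of a function on the circle bundle `ℝ² × S¹`. -/
noncomputable def pdx (w : ℝ → ℝ → ℝ → ℂ) (x y θ : ℝ) : ℂ :=
  deriv (fun x' => w x' y θ) x

/-- partial derivative in `y`. -/
noncomputable def pdy (w : ℝ → ℝ → ℝ → ℂ) (x y θ : ℝ) : ℂ :=
  deriv (fun y' => w x y' θ) y

/-- the geodesic vector field `X = cos θ ∂ₓ + sin θ ∂ᵧ` of the Euclidean plane. -/
noncomputable def Xgeo (w : ℝ → ℝ → ℝ → ℂ) : ℝ → ℝ → ℝ → ℂ :=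
  fun x y θ => (Real.cos θ : ℂ) * pdx w x y θ + (Real.sin θ : ℂ) * pdy w x y θ

/-- the perpendicular vector field `X₊ = sin θ ∂ₓ − cos θ ∂ᵧ`. -/
noncomputable def Xperp (w : ℝ → ℝ → ℝ → ℂ) : ℝ → ℝ → ℝ → ℂ :=
  fun x y θ => (Real.sin θ : ℂ) * pdx w x y θ - (Real.cos θ : ℂ) * pdy w x y θ

/-- the `k`-th fiberwise Fourier coefficient `(1/2π) ∫₀^{2π} w e^{−ikθ} dθ`. -/
noncomputable def fCoeff (w : ℝ → ℝ → ℝ → ℂ) (k : ℤ) (x y : ℝ) : ℂ :=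
  (1 / (2 * (Real.pi : ℂ))) *
    ∫ θ in (0:ℝ)..(2 * Real.pi), w x y θ * Complex.exp (-((k : ℂ) * (θ : ℂ) * Complex.I))

/-- the fiberwise Hilbert transform on trigonometric polynomials of degree at most `M`:
the `k`-th Fourier mode is multiplied by `−i·sgn(k)` (with `sgn 0 = 0`). -/
noncomputable def hilbertT (M : ℕ) (w : ℝ → ℝ → ℝ → ℂ) : ℝ → ℝ → ℝ → ℂ :=
  fun x y θ => ∑ k ∈ Finset.Icc (-(M : ℤ)) (M : ℤ),
    (-Complex.I * (Int.sign k : ℂ)) * fCoeff w k x y * Complex.exp ((k : ℂ) * (θ : ℂ) * Complex.I)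

open Complex

noncomputable def cxD (c : ℤ → ℝ → ℝ → ℂ) (k : ℤ) (x y : ℝ) : ℂ :=
  deriv (fun x' => c k x' y) x

noncomputable def cyD (c : ℤ → ℝ → ℝ → ℂ) (k : ℤ) (x y : ℝ) : ℂ :=
  deriv (fun y' => c k x y') y

noncomputable def Pc (c : ℤ → ℝ → ℝ → ℂ) (k : ℤ) (x y : ℝ) : ℂ :=
  (cxD c k x y - I * cyD c k x y) / 2

noncomputable def Qc (c : ℤ → ℝ → ℝ → ℂ) (k : ℤ) (x y : ℝ) : ℂ :=
  (cxD c k x y + I * cyD c k x y) / 2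

lemma integral_exp_int (n : ℤ) :
    ∫ θ in (0:ℝ)..(2*Real.pi), Complex.exp ((n:ℂ)*θ*Complex.I) = if n = 0 then (2*Real.pi:ℂ) else 0 := by
  rcases eq_or_ne n 0 with h | h
  · simp [h]
  · have hc : (n:ℂ)*Complex.I ≠ 0 := by
      simp [Complex.ext_iff, h]
    have key := integral_exp_mul_complex (a := 0) (b := 2*Real.pi) hc
    simp only [if_neg h]
    calc ∫ θ in (0:ℝ)..(2*Real.pi), Complex.exp ((n:ℂ)*θ*Complex.I)
        = ∫ θ in (0:ℝ)..(2*Real.pi), Complex.exp (((n:ℂ)*Complex.I)*θ) := by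
          apply intervalIntegral.integral_congr; intro θ _; ring_nf
      _ = (Complex.exp ((n:ℂ)*Complex.I*((2*Real.pi:ℝ):ℂ)) - Complex.exp ((n:ℂ)*Complex.I*((0:ℝ):ℂ))) / ((n:ℂ)*Complex.I) := key
      _ = 0 := by
          have h1 : (n:ℂ)*Complex.I*((2*Real.pi:ℝ):ℂ) = (n:ℤ) * (2 * Real.pi * Complex.I) := by push_cast; ring
          rw [h1, Complex.exp_int_mul_two_pi_mul_I]
          simp

lemma fCoeff_eq (w : ℝ → ℝ → ℝ → ℂ) (s : Finset ℤ) (a : ℤ → ℂ) (m : ℤ) (x y : ℝ)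
    (hw : ∀ θ : ℝ, w x y θ = ∑ k ∈ s, a k * Complex.exp ((k:ℂ)*θ*Complex.I)) :
    fCoeff w m x y = if m ∈ s then a m else 0 := by
  have hπ : (2*(Real.pi:ℂ)) ≠ 0 := by
    simp [Complex.ext_iff, Real.pi_ne_zero]
  have h1 : ∀ θ : ℝ, w x y θ * Complex.exp (-((m:ℂ)*θ*Complex.I))
      = ∑ k ∈ s, a k * Complex.exp ((((k - m : ℤ)):ℂ)*θ*Complex.I) := by
    intro θ
    rw [hw θ, Finset.sum_mul]
    refine Finset.sum_congr rfl fun k _ => ?_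
    rw [mul_assoc, ← Complex.exp_add]
    congr 1
    push_cast
    ring
  have h2 : (∫ θ in (0:ℝ)..(2*Real.pi), w x y θ * Complex.exp (-((m:ℂ)*θ*Complex.I)))
      = ∑ k ∈ s, a k * (if (k - m : ℤ) = 0 then (2*Real.pi:ℂ) else 0) := by
    rw [intervalIntegral.integral_congr (g := fun θ : ℝ => ∑ k ∈ s, a k * Complex.exp ((((k - m : ℤ)):ℂ)*θ*Complex.I)) (fun θ _ => h1 θ)]
    rw [intervalIntegral.integral_finset_sum]
    · refine Finset.sum_congr rfl fun k _ => ?_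
      rw [intervalIntegral.integral_const_mul, integral_exp_int]
    · intro k _
      apply Continuous.intervalIntegrable
      fun_prop
  rw [fCoeff, h2]
  simp only [sub_eq_zero, mul_ite, mul_zero]
  rw [Finset.sum_ite_eq' s m]
  split
  · field_simp
  · simp

lemma resum (N : ℕ) (P Q e : ℤ → ℂ) :
    ∑ k ∈ Finset.Icc (-(N:ℤ)) (N:ℤ), (P k * e (k+1) + Q k * e (k-1))
    = ∑ m ∈ Finset.Icc (-(N:ℤ)-1) ((N:ℤ)+1),
        ((if m-1 ∈ Finset.Icc (-(N:ℤ)) (N:ℤ) then P (m-1) else 0)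
          + (if m+1 ∈ Finset.Icc (-(N:ℤ)) (N:ℤ)  then Q (m+1) else 0)) * e m := by
  have h1 : (∑ k ∈ Finset.Icc (-(N:ℤ)) (N:ℤ), P k * e (k+1))
      = ∑ m ∈ Finset.Icc (-(N:ℤ)-1) ((N:ℤ)+1),
          (if m-1 ∈ Finset.Icc (-(N:ℤ)) (N:ℤ) then P (m-1) else 0) * e m := by
    calc (∑ k ∈ Finset.Icc (-(N:ℤ)) (N:ℤ), P k * e (k+1))
        = ∑ m ∈ Finset.Icc (-(N:ℤ)+1) ((N:ℤ)+1), P (m-1) * e m := by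
          rw [← Finset.map_add_right_Icc (-(N:ℤ)) (N:ℤ) 1, Finset.sum_map]
          simp [addRightEmbedding]
      _ = ∑ m ∈ Finset.Icc (-(N:ℤ)+1) ((N:ℤ)+1),
            (if m-1 ∈ Finset.Icc (-(N:ℤ)) (N:ℤ) then P (m-1) else 0) * e m := by
          refine Finset.sum_congr rfl fun m hm => ?_
          simp only [Finset.mem_Icc] at hm
          rw [if_pos (by simp only [Finset.mem_Icc]; omega)]
      _ = ∑ m ∈ Finset.Icc (-(N:ℤ)-1) ((N:ℤ)+1),
            (if m-1 ∈ Finset.Icc (-(N:ℤ)) (N:ℤ) then P (m-1) else 0) * e m := by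
          refine Finset.sum_subset (fun z hz => ?_) (fun m _ hm => ?_)
          · simp only [Finset.mem_Icc] at hz ⊢; omega
          · simp only [Finset.mem_Icc, not_and, not_le] at hm
            rw [if_neg (by simp only [Finset.mem_Icc]; omega), zero_mul]
  have h2 : (∑ k ∈ Finset.Icc (-(N:ℤ)) (N:ℤ), Q k * e (k-1))
      = ∑ m ∈ Finset.Icc (-(N:ℤ)-1) ((N:ℤ)+1),
          (if m+1 ∈ Finset.Icc (-(N:ℤ)) (N:ℤ) then Q (m+1) else 0) * e m := by
    calc (∑ k ∈ Finset.Icc (-(N:ℤ)) (N:ℤ), Q k * e (k-1))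
        = ∑ m ∈ Finset.Icc (-(N:ℤ)+(-1)) ((N:ℤ)+(-1)), Q (m+1) * e m := by
          rw [← Finset.map_add_right_Icc (-(N:ℤ)) (N:ℤ) (-1), Finset.sum_map]
          simp [addRightEmbedding, sub_eq_add_neg]
      _ = ∑ m ∈ Finset.Icc (-(N:ℤ)+(-1)) ((N:ℤ)+(-1)),
            (if m+1 ∈ Finset.Icc (-(N:ℤ)) (N:ℤ) then Q (m+1) else 0) * e m := by
          refine Finset.sum_congr rfl fun m hm => ?_
          simp only [Finset.mem_Icc] at hm
          rw [if_pos (by simp only [Finset.mem_Icc]; omega)]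
      _ = ∑ m ∈ Finset.Icc (-(N:ℤ)-1) ((N:ℤ)+1),
            (if m+1 ∈ Finset.Icc (-(N:ℤ)) (N:ℤ) then Q (m+1) else 0) * e m := by
          refine Finset.sum_subset (fun z hz => ?_) (fun m _ hm => ?_)
          · simp only [Finset.mem_Icc] at hz ⊢; omega
          · simp only [Finset.mem_Icc, not_and, not_le] at hm
            rw [if_neg (by simp only [Finset.mem_Icc]; omega), zero_mul]
  rw [Finset.sum_add_distrib, h1, h2, ← Finset.sum_add_distrib]
  refine Finset.sum_congr rfl fun m _ => by ring

lemma mode_X (A B : ℂ) (k : ℤ) (θ : ℝ) :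
    ((Real.cos θ:ℂ) * A + (Real.sin θ:ℂ) * B) * Complex.exp ((k:ℂ)*θ*I)
    = (A - I*B)/2 * Complex.exp (((k+1:ℤ):ℂ)*θ*I) + (A + I*B)/2 * Complex.exp (((k-1:ℤ):ℂ)*θ*I) := by
  have e1 : Complex.exp (((k+1:ℤ):ℂ)*θ*I) = Complex.exp ((k:ℂ)*θ*I) * Complex.exp ((θ:ℂ)*I) := by
    rw [← Complex.exp_add]; congr 1; push_cast; ring
  have e2 : Complex.exp (((k-1:ℤ):ℂ)*θ*I) = Complex.exp ((k:ℂ)*θ*I) * (Complex.exp ((θ:ℂ)*I))⁻¹ := by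
    rw [← Complex.exp_neg, ← Complex.exp_add]; congr 1; push_cast; ring
  have hcos : (Real.cos θ:ℂ) = (Complex.exp ((θ:ℂ)*I) + (Complex.exp ((θ:ℂ)*I))⁻¹)/2 := by
    rw [Complex.ofReal_cos, Complex.cos, show (-(θ:ℂ))*I = -((θ:ℂ)*I) by ring, Complex.exp_neg]
  have hsin : (Real.sin θ:ℂ) = ((Complex.exp ((θ:ℂ)*I))⁻¹ - Complex.exp ((θ:ℂ)*I)) * I / 2 := by
    rw [Complex.ofReal_sin, Complex.sin, show (-(θ:ℂ))*I = -((θ:ℂ)*I) by ring, Complex.exp_neg]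
  have hne : Complex.exp ((θ:ℂ)*I) ≠ 0 := Complex.exp_ne_zero _
  rw [e1, e2, hcos, hsin]
  field_simp
  ring_nf

lemma mode_Xperp (A B : ℂ) (k : ℤ) (θ : ℝ) :
    ((Real.sin θ:ℂ) * A - (Real.cos θ:ℂ) * B) * Complex.exp ((k:ℂ)*θ*I)
    = (-I) * ((A - I*B)/2) * Complex.exp (((k+1:ℤ):ℂ)*θ*I)
      + I * ((A + I*B)/2) * Complex.exp (((k-1:ℤ):ℂ)*θ*I) := by
  have hI : (I:ℂ)^2 = -1 := Complex.I_sq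
  have e1 : Complex.exp (((k+1:ℤ):ℂ)*θ*I) = Complex.exp ((k:ℂ)*θ*I) * Complex.exp ((θ:ℂ)*I) := by
    rw [← Complex.exp_add]; congr 1; push_cast; ring
  have e2 : Complex.exp (((k-1:ℤ):ℂ)*θ*I) = Complex.exp ((k:ℂ)*θ*I) * (Complex.exp ((θ:ℂ)*I))⁻¹ := by
    rw [← Complex.exp_neg, ← Complex.exp_add]; congr 1; push_cast; ring
  have hcos : (Real.cos θ:ℂ) = (Complex.exp ((θ:ℂ)*I) + (Complex.exp ((θ:ℂ)*I))⁻¹)/2 := by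
    rw [Complex.ofReal_cos, Complex.cos, show (-(θ:ℂ))*I = -((θ:ℂ)*I) by ring, Complex.exp_neg]
  have hsin : (Real.sin θ:ℂ) = ((Complex.exp ((θ:ℂ)*I))⁻¹ - Complex.exp ((θ:ℂ)*I)) * I / 2 := by
    rw [Complex.ofReal_sin, Complex.sin, show (-(θ:ℂ))*I = -((θ:ℂ)*I) by ring, Complex.exp_neg]
  have hne : Complex.exp ((θ:ℂ)*I) ≠ 0 := Complex.exp_ne_zero _
  rw [e1, e2, hcos, hsin]
  field_simp
  ring_nf
  rw [hI]
  ring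

lemma pdx_modes (a : ℤ → ℝ → ℝ → ℂ) (s : Finset ℤ)
    (ha : ∀ k y₀, Differentiable ℝ (fun x' => a k x' y₀)) (x y θ : ℝ) :
    pdx (fun x y θ => ∑ k ∈ s, a k x y * Complex.exp ((k:ℂ)*θ*I)) x y θ
    = ∑ k ∈ s, deriv (fun x' => a k x' y) x * Complex.exp ((k:ℂ)*θ*I) := by
  rw [pdx, deriv_fun_sum (fun k _ => ((ha k y).differentiableAt).mul_const _)]
  exact Finset.sum_congr rfl fun k _ => deriv_mul_const ((ha k y).differentiableAt) _

lemma pdy_modes (a : ℤ → ℝ → ℝ → ℂ) (s : Finset ℤ)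
    (ha : ∀ k x₀, Differentiable ℝ (fun y' => a k x₀ y')) (x y θ : ℝ) :
    pdy (fun x y θ => ∑ k ∈ s, a k x y * Complex.exp ((k:ℂ)*θ*I)) x y θ
    = ∑ k ∈ s, deriv (fun y' => a k x y') y * Complex.exp ((k:ℂ)*θ*I) := by
  rw [pdy, deriv_fun_sum (fun k _ => ((ha k x).differentiableAt).mul_const _)]
  exact Finset.sum_congr rfl fun k _ => deriv_mul_const ((ha k x).differentiableAt) _

lemma key_alg (N : ℕ) (P Q e : ℤ → ℂ) (he0 : e 0 = 1) :
    (∑ m ∈ Finset.Icc (-(N:ℤ)-1) ((N:ℤ)+1),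
        (-I * (Int.sign m : ℂ)) *
        ((if m-1 ∈ Finset.Icc (-(N:ℤ)) (N:ℤ) then P (m-1) else 0)
          + (if m+1 ∈ Finset.Icc (-(N:ℤ)) (N:ℤ) then Q (m+1) else 0)) * e m)
    - (∑ m ∈ Finset.Icc (-(N:ℤ)-1) ((N:ℤ)+1),
        ((if m-1 ∈ Finset.Icc (-(N:ℤ)) (N:ℤ) then (-I * (Int.sign (m-1) : ℂ)) * P (m-1) else 0)
          + (if m+1 ∈ Finset.Icc (-(N:ℤ)) (N:ℤ) then (-I * (Int.sign (m+1) : ℂ)) * Q (m+1) else 0)) * e m)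
    = ((if (-1:ℤ) ∈ Finset.Icc (-(N:ℤ)) (N:ℤ) then -I * P (-1) else 0)
        + (if (1:ℤ) ∈ Finset.Icc (-(N:ℤ)) (N:ℤ) then I * Q 1 else 0))
      + ((-I) * P 0 * e 1 + I * Q 0 * e (-1)) := by
  rw [← Finset.sum_sub_distrib]
  have h0T : (0:ℤ) ∈ Finset.Icc (-(N:ℤ)) (N:ℤ) := by simp
  have step : ∀ m ∈ Finset.Icc (-(N:ℤ)-1) ((N:ℤ)+1),
      ((-I * (Int.sign m : ℂ)) *
        ((if m-1 ∈ Finset.Icc (-(N:ℤ)) (N:ℤ) then P (m-1) else 0)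
          + (if m+1 ∈ Finset.Icc (-(N:ℤ)) (N:ℤ) then Q (m+1) else 0)) * e m
      - ((if m-1 ∈ Finset.Icc (-(N:ℤ)) (N:ℤ) then (-I * (Int.sign (m-1) : ℂ)) * P (m-1) else 0)
          + (if m+1 ∈ Finset.Icc (-(N:ℤ)) (N:ℤ) then (-I * (Int.sign (m+1) : ℂ)) * Q (m+1) else 0)) * e m)
      = (if m = 0 then ((if (-1:ℤ) ∈ Finset.Icc (-(N:ℤ)) (N:ℤ) then -I * P (-1) else 0)
            + (if (1:ℤ) ∈ Finset.Icc (-(N:ℤ)) (N:ℤ) then I * Q 1 else 0)) * e 0 else 0)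
        + ((if m = 1 then (-I) * P 0 * e 1 else 0) + (if m = -1 then I * Q 0 * e (-1) else 0)) := by
    intro m _
    rcases eq_or_ne m 0 with rfl | hm0
    · norm_num
      split <;> ring
    rcases eq_or_ne m 1 with rfl | hm1
    · simp only [show (1:ℤ)-1=0 by norm_num, show (1:ℤ)+1=2 by norm_num, h0T, if_true,
        if_neg hm0, if_pos rfl, if_neg (show (1:ℤ) ≠ -1 by norm_num), Int.sign_one,
        show Int.sign 2 = 1 by decide, Int.sign_zero, Int.cast_one, Int.cast_zero]
      split <;> ring
    rcases eq_or_ne m (-1) with rfl | hmn1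
    · simp only [show (-1:ℤ)-1=-2 by norm_num, show (-1:ℤ)+1=0 by norm_num, h0T, if_true,
        if_neg hm0, if_neg hm1, if_pos rfl, show Int.sign (-1) = -1 by decide,
        show Int.sign (-2) = -1 by decide, Int.sign_zero, Int.cast_neg, Int.cast_one, Int.cast_zero]
      split <;> ring
    · rw [if_neg hm0, if_neg hm1, if_neg hmn1]
      have hsgn : Int.sign (m-1) = Int.sign m ∧ Int.sign (m+1) = Int.sign m := by
        rcases lt_or_gt_of_ne hm0 with h | h
        · rw [Int.sign_eq_neg_one_of_neg (by omega), Int.sign_eq_neg_one_of_neg (by omega),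
            Int.sign_eq_neg_one_of_neg (by omega)]
          exact ⟨rfl, rfl⟩
        · rw [Int.sign_eq_one_of_pos (by omega), Int.sign_eq_one_of_pos (by omega),
            Int.sign_eq_one_of_pos (by omega)]
          exact ⟨rfl, rfl⟩
      rw [hsgn.1, hsgn.2, add_zero]
      split <;> split <;> ring
  rw [Finset.sum_congr rfl step]
  have hmem : ∀ z : ℤ, z = -1 ∨ z = 0 ∨ z = 1 → z ∈ Finset.Icc (-(N:ℤ)-1) ((N:ℤ)+1) := by
    intro z hz; simp only [Finset.mem_Icc]; omega
  rw [Finset.sum_add_distrib, Finset.sum_add_distrib, Finset.sum_ite_eq' _ (0:ℤ),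
    Finset.sum_ite_eq' _ (1:ℤ), Finset.sum_ite_eq' _ (-1:ℤ),
    if_pos (hmem 0 (by norm_num)), if_pos (hmem 1 (by norm_num)), if_pos (hmem (-1) (by norm_num)), he0]
  ring

lemma Xgeo_modes (c : ℤ → ℝ → ℝ → ℂ) (N : ℕ)
    (hdx : ∀ (k : ℤ) (y₀ : ℝ), Differentiable ℝ (fun x' => c k x' y₀))
    (hdy : ∀ (k : ℤ) (x₀ : ℝ), Differentiable ℝ (fun y' => c k x₀ y'))
    (x y θ : ℝ) :
    Xgeo (fun x y θ => ∑ k ∈ Finset.Icc (-(N:ℤ)) (N:ℤ), c k x y * Complex.exp ((k:ℂ)*θ*I)) x y θ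
    = ∑ m ∈ Finset.Icc (-(N:ℤ)-1) ((N:ℤ)+1),
        ((if m-1 ∈ Finset.Icc (-(N:ℤ)) (N:ℤ) then Pc c (m-1) x y else 0)
          + (if m+1 ∈ Finset.Icc (-(N:ℤ)) (N:ℤ) then Qc c (m+1) x y else 0)) * Complex.exp ((m:ℂ)*θ*I) := by
  calc Xgeo (fun x y θ => ∑ k ∈ Finset.Icc (-(N:ℤ)) (N:ℤ), c k x y * Complex.exp ((k:ℂ)*θ*I)) x y θ
      = ∑ k ∈ Finset.Icc (-(N:ℤ)) (N:ℤ),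
          ((Real.cos θ:ℂ) * cxD c k x y + (Real.sin θ:ℂ) * cyD c k x y) * Complex.exp ((k:ℂ)*θ*I) := by
        rw [Xgeo, pdx_modes c _ hdx, pdy_modes c _ hdy, Finset.mul_sum, Finset.mul_sum,
          ← Finset.sum_add_distrib]
        exact Finset.sum_congr rfl fun k _ => by rw [cxD, cyD]; ring
    _ = ∑ k ∈ Finset.Icc (-(N:ℤ)) (N:ℤ),
          (Pc c k x y * Complex.exp (((k+1:ℤ):ℂ)*θ*I) + Qc c k x y * Complex.exp (((k-1:ℤ):ℂ)*θ*I)) := by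
        refine Finset.sum_congr rfl fun k _ => ?_
        rw [mode_X]
        simp only [Pc, Qc]
    _ = _ := resum N (fun k => Pc c k x y) (fun k => Qc c k x y) (fun m => Complex.exp ((m:ℂ)*θ*I))

lemma Xperp_modes (c : ℤ → ℝ → ℝ → ℂ) (N : ℕ)
    (hdx : ∀ (k : ℤ) (y₀ : ℝ), Differentiable ℝ (fun x' => c k x' y₀))
    (hdy : ∀ (k : ℤ) (x₀ : ℝ), Differentiable ℝ (fun y' => c k x₀ y'))
    (x y θ : ℝ) :
    Xperp (fun x y θ => ∑ k ∈ Finset.Icc (-(N:ℤ)) (N:ℤ), c k x y * Complex.exp ((k:ℂ)*θ*I)) x y θ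
    = ∑ m ∈ Finset.Icc (-(N:ℤ)-1) ((N:ℤ)+1),
        ((if m-1 ∈ Finset.Icc (-(N:ℤ)) (N:ℤ) then (-I) * Pc c (m-1) x y else 0)
          + (if m+1 ∈ Finset.Icc (-(N:ℤ)) (N:ℤ) then I * Qc c (m+1) x y else 0)) * Complex.exp ((m:ℂ)*θ*I) := by
  calc Xperp (fun x y θ => ∑ k ∈ Finset.Icc (-(N:ℤ)) (N:ℤ), c k x y * Complex.exp ((k:ℂ)*θ*I)) x y θ
      = ∑ k ∈ Finset.Icc (-(N:ℤ)) (N:ℤ),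
          ((Real.sin θ:ℂ) * cxD c k x y - (Real.cos θ:ℂ) * cyD c k x y) * Complex.exp ((k:ℂ)*θ*I) := by
        rw [Xperp, pdx_modes c _ hdx, pdy_modes c _ hdy, Finset.mul_sum, Finset.mul_sum,
          ← Finset.sum_sub_distrib]
        exact Finset.sum_congr rfl fun k _ => by rw [cxD, cyD]; ring
    _ = ∑ k ∈ Finset.Icc (-(N:ℤ)) (N:ℤ),
          (((-I) * Pc c k x y) * Complex.exp (((k+1:ℤ):ℂ)*θ*I)
            + (I * Qc c k x y) * Complex.exp (((k-1:ℤ):ℂ)*θ*I)) := by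
        refine Finset.sum_congr rfl fun k _ => ?_
        rw [mode_Xperp]
        simp only [Pc, Qc]
    _ = _ := resum N (fun k => (-I) * Pc c k x y) (fun k => I * Qc c k x y) (fun m => Complex.exp ((m:ℂ)*θ*I))

lemma Pc_twist (c : ℤ → ℝ → ℝ → ℂ)
    (hdx : ∀ (k : ℤ) (y₀ : ℝ), Differentiable ℝ (fun x' => c k x' y₀))
    (hdy : ∀ (k : ℤ) (x₀ : ℝ), Differentiable ℝ (fun y' => c k x₀ y')) (k : ℤ) (x y : ℝ) :
    Pc (fun k x y => -Complex.I * (Int.sign k : ℂ) * c k x y) k x y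
      = -Complex.I * (Int.sign k : ℂ) * Pc c k x y := by
  have h1 : cxD (fun k x y => -Complex.I * (Int.sign k : ℂ) * c k x y) k x y
      = -Complex.I * (Int.sign k : ℂ) * cxD c k x y := by
    rw [cxD, cxD, ← deriv_const_mul _ ((hdx k y).differentiableAt)]
  have h2 : cyD (fun k x y => -Complex.I * (Int.sign k : ℂ) * c k x y) k x y
      = -Complex.I * (Int.sign k : ℂ) * cyD c k x y := by
    rw [cyD, cyD, ← deriv_const_mul _ ((hdy k x).differentiableAt)]
  rw [Pc, Pc, h1, h2]
  ring

lemma Qc_twist (c : ℤ → ℝ → ℝ → ℂ)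
    (hdx : ∀ (k : ℤ) (y₀ : ℝ), Differentiable ℝ (fun x' => c k x' y₀))
    (hdy : ∀ (k : ℤ) (x₀ : ℝ), Differentiable ℝ (fun y' => c k x₀ y')) (k : ℤ) (x y : ℝ) :
    Qc (fun k x y => -Complex.I * (Int.sign k : ℂ) * c k x y) k x y
      = -Complex.I * (Int.sign k : ℂ) * Qc c k x y := by
  have h1 : cxD (fun k x y => -Complex.I * (Int.sign k : ℂ) * c k x y) k x y
      = -Complex.I * (Int.sign k : ℂ) * cxD c k x y := by
    rw [cxD, cxD, ← deriv_const_mul _ ((hdx k y).differentiableAt)]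
  have h2 : cyD (fun k x y => -Complex.I * (Int.sign k : ℂ) * c k x y) k x y
      = -Complex.I * (Int.sign k : ℂ) * cyD c k x y := by
    rw [cyD, cyD, ← deriv_const_mul _ ((hdy k x).differentiableAt)]
  rw [Qc, Qc, h1, h2]
  ring

/-- **Pestov–Uhlmann commutator formula on the Euclidean plane** (the flat instance of
equation (4.4) of the survey): for a fiberwise trigonometric polynomial
`u = Σ_{|k|≤N} u_k e^{ikθ}` with smooth coefficients,
`[H, X]u = (X₊u)₀ + X₊(u₀)`,
where `H` multiplies the `k`-th fiberwise Fourier mode by `−i·sgn(k)`, `X` and `X₊` are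
the geodesic and perpendicular fields, and `(·)₀` is the fiberwise average. -/
theorem hilbert_transform_commutator (N : ℕ) (c : ℤ → ℝ → ℝ → ℂ)
    (hc : ∀ k : ℤ, ContDiff ℝ (⊤ : ℕ∞) (fun p : ℝ × ℝ => c k p.1 p.2))
    (u : ℝ → ℝ → ℝ → ℂ)
    (hu : u = fun (x y θ : ℝ) => ∑ k ∈ Finset.Icc (-(N : ℤ)) (N : ℤ),
      c k x y * Complex.exp ((k : ℂ) * (θ : ℂ) * Complex.I)) :
    ∀ x y θ : ℝ,
      hilbertT (N + 1) (Xgeo u) x y θ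
        - Xgeo (fun (x' y' θ' : ℝ) => ∑ k ∈ Finset.Icc (-(N : ℤ)) (N : ℤ),
            (-Complex.I * (Int.sign k : ℂ)) * c k x' y' *
              Complex.exp ((k : ℂ) * (θ' : ℂ) * Complex.I)) x y θ =
      fCoeff (Xperp u) 0 x y + Xperp (fun x' y' _ => fCoeff u 0 x' y') x y θ := by
  subst hu
  intro x y θ
  have hdx : ∀ (k : ℤ) (y₀ : ℝ), Differentiable ℝ (fun x' => c k x' y₀) := fun k y₀ =>
    ((hc k).differentiable (by simp)).comp (differentiable_id.prodMk (differentiable_const y₀))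
  have hdy : ∀ (k : ℤ) (x₀ : ℝ), Differentiable ℝ (fun y' => c k x₀ y') := fun k x₀ =>
    ((hc k).differentiable (by simp)).comp ((differentiable_const x₀).prodMk differentiable_id)
  have h0T : (0:ℤ) ∈ Finset.Icc (-(N:ℤ)) (N:ℤ) := by simp
  have h0S : (0:ℤ) ∈ Finset.Icc (-(N:ℤ)-1) ((N:ℤ)+1) := by
    simp only [Finset.mem_Icc]; omega
  have hIcc : Finset.Icc (-((N+1:ℕ):ℤ)) ((N+1:ℕ):ℤ) = Finset.Icc (-(N:ℤ)-1) ((N:ℤ)+1) := by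
    congr 1 <;> push_cast <;> ring
  -- Piece A
  have hA : hilbertT (N + 1)
      (Xgeo (fun (x y θ : ℝ) => ∑ k ∈ Finset.Icc (-(N : ℤ)) (N : ℤ),
        c k x y * Complex.exp ((k : ℂ) * (θ : ℂ) * Complex.I))) x y θ
      = ∑ m ∈ Finset.Icc (-(N:ℤ)-1) ((N:ℤ)+1),
          (-Complex.I * (Int.sign m : ℂ)) *
          ((if m-1 ∈ Finset.Icc (-(N:ℤ)) (N:ℤ) then Pc c (m-1) x y else 0)
            + (if m+1 ∈ Finset.Icc (-(N:ℤ)) (N:ℤ) then Qc c (m+1) x y else 0)) *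
          Complex.exp ((m:ℂ)*θ*Complex.I) := by
    simp only [hilbertT]
    rw [hIcc]
    refine Finset.sum_congr rfl fun m hm => ?_
    rw [fCoeff_eq _ (Finset.Icc (-(N:ℤ)-1) ((N:ℤ)+1))
      (fun m => (if m-1 ∈ Finset.Icc (-(N:ℤ)) (N:ℤ) then Pc c (m-1) x y else 0)
        + (if m+1 ∈ Finset.Icc (-(N:ℤ)) (N:ℤ) then Qc c (m+1) x y else 0)) m x y
      (fun θ' => Xgeo_modes c N hdx hdy x y θ'), if_pos hm]
  -- Piece B
  have hB : Xgeo (fun (x' y' θ' : ℝ) => ∑ k ∈ Finset.Icc (-(N : ℤ)) (N : ℤ),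
        (-Complex.I * (Int.sign k : ℂ)) * c k x' y' *
          Complex.exp ((k : ℂ) * (θ' : ℂ) * Complex.I)) x y θ
      = ∑ m ∈ Finset.Icc (-(N:ℤ)-1) ((N:ℤ)+1),
          ((if m-1 ∈ Finset.Icc (-(N:ℤ)) (N:ℤ)
              then (-Complex.I * (Int.sign (m-1) : ℂ)) * Pc c (m-1) x y else 0)
            + (if m+1 ∈ Finset.Icc (-(N:ℤ)) (N:ℤ)
              then (-Complex.I * (Int.sign (m+1) : ℂ)) * Qc c (m+1) x y else 0)) *
          Complex.exp ((m:ℂ)*θ*Complex.I) := by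
    calc Xgeo (fun (x' y' θ' : ℝ) => ∑ k ∈ Finset.Icc (-(N : ℤ)) (N : ℤ),
          (-Complex.I * (Int.sign k : ℂ)) * c k x' y' *
            Complex.exp ((k : ℂ) * (θ' : ℂ) * Complex.I)) x y θ
        = ∑ m ∈ Finset.Icc (-(N:ℤ)-1) ((N:ℤ)+1),
            ((if m-1 ∈ Finset.Icc (-(N:ℤ)) (N:ℤ)
                then Pc (fun k x y => -Complex.I * (Int.sign k : ℂ) * c k x y) (m-1) x y else 0)
              + (if m+1 ∈ Finset.Icc (-(N:ℤ)) (N:ℤ)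
                then Qc (fun k x y => -Complex.I * (Int.sign k : ℂ) * c k x y) (m+1) x y else 0)) *
            Complex.exp ((m:ℂ)*θ*Complex.I) :=
          Xgeo_modes (fun k x y => -Complex.I * (Int.sign k : ℂ) * c k x y) N
            (fun k y₀ => (hdx k y₀).const_mul _) (fun k x₀ => (hdy k x₀).const_mul _) x y θ
      _ = _ := by
          refine Finset.sum_congr rfl fun m _ => ?_
          rw [Pc_twist c hdx hdy, Qc_twist c hdx hdy]
  -- Piece C
  have hC : fCoeff (Xperp (fun (x y θ : ℝ) => ∑ k ∈ Finset.Icc (-(N : ℤ)) (N : ℤ),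
        c k x y * Complex.exp ((k : ℂ) * (θ : ℂ) * Complex.I))) 0 x y
      = (if (-1:ℤ) ∈ Finset.Icc (-(N:ℤ)) (N:ℤ) then -Complex.I * Pc c (-1) x y else 0)
        + (if (1:ℤ) ∈ Finset.Icc (-(N:ℤ)) (N:ℤ) then Complex.I * Qc c 1 x y else 0) := by
    rw [fCoeff_eq _ (Finset.Icc (-(N:ℤ)-1) ((N:ℤ)+1))
      (fun m => (if m-1 ∈ Finset.Icc (-(N:ℤ)) (N:ℤ) then (-Complex.I) * Pc c (m-1) x y else 0)
        + (if m+1 ∈ Finset.Icc (-(N:ℤ)) (N:ℤ) then Complex.I * Qc c (m+1) x y else 0)) 0 x y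
      (fun θ' => Xperp_modes c N hdx hdy x y θ'), if_pos h0S]
    norm_num
  -- Piece D
  have hD : Xperp (fun x' y' _ => fCoeff (fun (x y θ : ℝ) => ∑ k ∈ Finset.Icc (-(N : ℤ)) (N : ℤ),
        c k x y * Complex.exp ((k : ℂ) * (θ : ℂ) * Complex.I)) 0 x' y') x y θ
      = -Complex.I * Pc c 0 x y * Complex.exp (((1:ℤ):ℂ)*θ*Complex.I)
        + Complex.I * Qc c 0 x y * Complex.exp ((((-1):ℤ):ℂ)*θ*Complex.I) := by
    have hcoe : (fun x' y' (_ : ℝ) => fCoeff (fun (x y θ : ℝ) => ∑ k ∈ Finset.Icc (-(N : ℤ)) (N : ℤ),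
        c k x y * Complex.exp ((k : ℂ) * (θ : ℂ) * Complex.I)) 0 x' y')
        = (fun x' y' (_ : ℝ) => c 0 x' y') := by
      funext x' y' θ'
      rw [fCoeff_eq _ (Finset.Icc (-(N:ℤ)) (N:ℤ)) (fun k => c k x' y') 0 x' y'
        (fun θ'' => rfl), if_pos h0T]
    rw [hcoe]
    calc Xperp (fun x' y' (_ : ℝ) => c 0 x' y') x y θ
        = ((Real.sin θ:ℂ) * cxD c 0 x y - (Real.cos θ:ℂ) * cyD c 0 x y)
            * Complex.exp (((0:ℤ):ℂ)*θ*Complex.I) := by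
          simp only [Xperp, pdx, pdy, cxD, cyD, Int.cast_zero, zero_mul, Complex.exp_zero, mul_one]
      _ = _ := by
          rw [mode_Xperp]
          simp only [Pc, Qc, show (0:ℤ)+1 = 1 by decide, show (0:ℤ)-1 = -1 by decide]
  rw [hA, hB, hC, hD]
  exact key_alg N (fun k => Pc c k x y) (fun k => Qc c k x y)
    (fun m => Complex.exp ((m:ℂ)*θ*Complex.I)) (by norm_num)
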